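/- In the two-outcome concurrent missingness setting (R_1 = R_2 always), the full-data distribution is not identified: there exist two different joint distributions of (Y_1, Y_2, R) that satisfy self-censoring, agree on the observed-data distribution of (Y_{(R)}, R), but differ in f(y_1, y_2, R_1 = R_2 = 0). -/
import Mathlib


open Finset
open scoped Classical

noncomputable def pr {Ω : Type*} [Fintype Ω] (μ : Ω → ℝ) (A : Ω → Prop) : ℝ :=
  ∑ ω, if A ω then μ ω else 0

noncomputable def cpr {Ω : Type*} [Fintype Ω] (μ : Ω → ℝ) (A B : Ω → Prop) : ℝ :=
  pr μ (fun ω => A ω ∧ B ω) / pr μ B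

/-- A sample point is `(y₁, y₂, r)` with `r = R₁ = R₂` the common missingness
indicator of the two concurrently missing binary outcomes. -/
abbrev CCOmega := Bool × Bool × Bool

/-- Self-censoring `R₁ ⫫ Y₂ | (Y₁, R₂)` in the concurrent-missingness setting
(`R₁ = R₂ = ω.2.2`). -/
def SC1 (q : CCOmega → ℝ) : Prop :=
  ∀ (a : Bool) (y₁ b r₂ : Bool),
    pr q (fun ω => ω.1 = y₁ ∧ ω.2.2 = r₂) > 0 →
    cpr q (fun ω => ω.2.2 = a ∧ ω.2.1 = b) (fun ω => ω.1 = y₁ ∧ ω.2.2 = r₂)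
      = cpr q (fun ω => ω.2.2 = a) (fun ω => ω.1 = y₁ ∧ ω.2.2 = r₂)
        * cpr q (fun ω => ω.2.1 = b) (fun ω => ω.1 = y₁ ∧ ω.2.2 = r₂)

/-- Self-censoring `R₂ ⫫ Y₁ | (Y₂, R₁)` in the concurrent-missingness setting. -/
def SC2 (q : CCOmega → ℝ) : Prop :=
  ∀ (a : Bool) (y₂ b r₁ : Bool),
    pr q (fun ω => ω.2.1 = y₂ ∧ ω.2.2 = r₁) > 0 →
    cpr q (fun ω => ω.2.2 = a ∧ ω.1 = b) (fun ω => ω.2.1 = y₂ ∧ ω.2.2 = r₁)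
      = cpr q (fun ω => ω.2.2 = a) (fun ω => ω.2.1 = y₂ ∧ ω.2.2 = r₁)
        * cpr q (fun ω => ω.1 = b) (fun ω => ω.2.1 = y₂ ∧ ω.2.2 = r₁)

lemma pr_congr {Ω : Type*} [Fintype Ω] (μ : Ω → ℝ) {A B : Ω → Prop}
    (h : ∀ ω, A ω ↔ B ω) : pr μ A = pr μ B := by
  unfold pr; apply Finset.sum_congr rfl; intro ω _
  by_cases hA : A ω
  · rw [if_pos hA, if_pos ((h ω).mp hA)]
  · rw [if_neg hA, if_neg (fun hB => hA ((h ω).mpr hB))]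

lemma pr_false {Ω : Type*} [Fintype Ω] (μ : Ω → ℝ) {A : Ω → Prop}
    (h : ∀ ω, ¬ A ω) : pr μ A = 0 := by
  unfold pr
  exact Finset.sum_eq_zero (fun ω _ => if_neg (h ω))

lemma SC1_all (q : CCOmega → ℝ) : SC1 q := by
  intro a y₁ b r₂ h
  by_cases hac : a = r₂
  · subst hac
    have h1 : pr q (fun ω => (ω.2.2 = a ∧ ω.2.1 = b) ∧ (ω.1 = y₁ ∧ ω.2.2 = a))
        = pr q (fun ω => (ω.2.1 = b) ∧ (ω.1 = y₁ ∧ ω.2.2 = a)) :=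
      pr_congr q (by tauto)
    have h2 : pr q (fun ω => (ω.2.2 = a) ∧ (ω.1 = y₁ ∧ ω.2.2 = a))
        = pr q (fun ω => ω.1 = y₁ ∧ ω.2.2 = a) := pr_congr q (by tauto)
    unfold cpr
    rw [h1, h2, div_self (ne_of_gt h), one_mul]
  · have h1 : pr q (fun ω => (ω.2.2 = a ∧ ω.2.1 = b) ∧ (ω.1 = y₁ ∧ ω.2.2 = r₂)) = 0 :=
      pr_false q (by rintro ω ⟨⟨h1, -⟩, -, h2⟩; exact hac (h1 ▸ h2 ▸ rfl))
    have h2 : pr q (fun ω => (ω.2.2 = a) ∧ (ω.1 = y₁ ∧ ω.2.2 = r₂)) = 0 :=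
      pr_false q (by rintro ω ⟨h1, -, h2⟩; exact hac (h1 ▸ h2 ▸ rfl))
    simp [cpr, h1, h2]

lemma SC2_all (q : CCOmega → ℝ) : SC2 q := by
  intro a y₂ b r₁ h
  by_cases hac : a = r₁
  · subst hac
    have h1 : pr q (fun ω => (ω.2.2 = a ∧ ω.1 = b) ∧ (ω.2.1 = y₂ ∧ ω.2.2 = a))
        = pr q (fun ω => (ω.1 = b) ∧ (ω.2.1 = y₂ ∧ ω.2.2 = a)) :=
      pr_congr q (by tauto)
    have h2 : pr q (fun ω => (ω.2.2 = a) ∧ (ω.2.1 = y₂ ∧ ω.2.2 = a))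
        = pr q (fun ω => ω.2.1 = y₂ ∧ ω.2.2 = a) := pr_congr q (by tauto)
    unfold cpr
    rw [h1, h2, div_self (ne_of_gt h), one_mul]
  · have h1 : pr q (fun ω => (ω.2.2 = a ∧ ω.1 = b) ∧ (ω.2.1 = y₂ ∧ ω.2.2 = r₁)) = 0 :=
      pr_false q (by rintro ω ⟨⟨h1, -⟩, -, h2⟩; exact hac (h1 ▸ h2 ▸ rfl))
    have h2 : pr q (fun ω => (ω.2.2 = a) ∧ (ω.2.1 = y₂ ∧ ω.2.2 = r₁)) = 0 :=
      pr_false q (by rintro ω ⟨h1, -, h2⟩; exact hac (h1 ▸ h2 ▸ rfl))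
    simp [cpr, h1, h2]

noncomputable def qA : CCOmega → ℝ := fun _ => 1/8
noncomputable def qB : CCOmega → ℝ := fun ω =>
  if ω.2.2 then 1/8 else (if ω.1 = ω.2.1 then 1/4 else 0)

/-- in the two-outcome concurrent-missingness setting the full-data law
is not identified: there are two probability mass functions satisfying self-censoring,
with both patterns positive, that agree on the observed-data distribution but differ
on `f(y₁, y₂, R₁ = R₂ = 0)`. -/
theorem stmt17 :
    ∃ q q' : CCOmega → ℝ,
      (∀ ω, 0 ≤ q ω) ∧ (∑ ω, q ω) = 1 ∧
      (∀ ω, 0 ≤ q' ω) ∧ (∑ ω, q' ω) = 1 ∧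
      pr q (fun ω => ω.2.2 = true) > 0 ∧ pr q (fun ω => ω.2.2 = false) > 0 ∧
      pr q' (fun ω => ω.2.2 = true) > 0 ∧ pr q' (fun ω => ω.2.2 = false) > 0 ∧
      SC1 q ∧ SC2 q ∧ SC1 q' ∧ SC2 q' ∧
      (∀ y₁ y₂ : Bool, q (y₁, y₂, true) = q' (y₁, y₂, true)) ∧
      (∑ y₁ : Bool, ∑ y₂ : Bool, q (y₁, y₂, false))
        = (∑ y₁ : Bool, ∑ y₂ : Bool, q' (y₁, y₂, false)) ∧
      (∃ y₁ y₂ : Bool, q (y₁, y₂, false) ≠ q' (y₁, y₂, false)) := by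
  refine ⟨qA, qB, ?_, ?_, ?_, ?_, ?_, ?_, ?_, ?_, SC1_all _, SC2_all _, SC1_all _, SC2_all _,
    ?_, ?_, ⟨true, false, ?_⟩⟩ <;>
    simp [qA, qB, pr, Fintype.sum_prod_type, Fintype.sum_bool] <;> norm_num
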